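/- arXiv:2509.00832 — 4 statements merged into one kernel-verified Lean document; each statement's English description precedes it below -/
import Mathlib

section
/- Let N ≥ 1 and let x, y : Fin N → EuclideanSpace ℝ (Fin 3) be two point clouds. Then PM²(x,y) ≤ 2 · RMSD²(x,y), i.e. (1/N²)·Σ_{i,j} (‖x i − x j‖ − ‖y i − y j‖)² ≤ (2/N)·Σ_i ‖x i − y i‖². -/
/-! Since `|‖a‖ - ‖b‖| ≤ ‖a - b‖`, each pairwise term of PM² is bounded by `‖u i - u j‖²` for the
displacements `u i = x i - y i`. Expanding the square, `∑ i, ∑ j, ‖u i - u j‖² = 2N ∑ i, ‖u i‖² - 2‖∑ i, u i‖²`,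
which is at most `2N ∑ i, ‖u i‖² = 2N² · RMSD²`. -/

open Finset

theorem sq_norm_sub_norm_le_sq_norm_sub {E : Type*} [SeminormedAddCommGroup E] (a b : E) :
    (‖a‖ - ‖b‖) ^ 2 ≤ ‖a - b‖ ^ 2 := by
  obtain ⟨hlower, hupper⟩ := abs_le.mp (abs_norm_sub_norm_le a b)
  exact sq_le_sq' hlower hupper

section InnerProductSpace

variable {ι E : Type*} [Fintype ι] [NormedAddCommGroup E] [InnerProductSpace ℝ E]

theorem sum_sum_inner_eq_norm_sum_sq (u : ι → E) :
    ∑ i, ∑ j, inner ℝ (u i) (u j) = ‖∑ i, u i‖ ^ 2 := by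
  rw [← real_inner_self_eq_norm_sq, sum_inner]
  simp only [inner_sum]

theorem sum_sum_norm_sub_sq_eq (u : ι → E) :
    ∑ i, ∑ j, ‖u i - u j‖ ^ 2 =
      2 * Fintype.card ι * ∑ i, ‖u i‖ ^ 2 - 2 * ‖∑ i, u i‖ ^ 2 := by
  simp only [norm_sub_sq_real, sum_add_distrib, sum_sub_distrib, ← mul_sum, sum_const,
    card_univ, nsmul_eq_mul, sum_sum_inner_eq_norm_sum_sq]
  ring

theorem sum_sum_norm_sub_sq_le (u : ι → E) :
    ∑ i, ∑ j, ‖u i - u j‖ ^ 2 ≤ 2 * Fintype.card ι * ∑ i, ‖u i‖ ^ 2 := by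
  rw [sum_sum_norm_sub_sq_eq]
  linarith [sq_nonneg ‖∑ i, u i‖]

theorem sum_sum_sq_norm_sub_sub_norm_sub_le (x y : ι → E) :
    ∑ i, ∑ j, (‖x i - x j‖ - ‖y i - y j‖) ^ 2 ≤
      2 * Fintype.card ι * ∑ i, ‖x i - y i‖ ^ 2 :=
  calc ∑ i, ∑ j, (‖x i - x j‖ - ‖y i - y j‖) ^ 2
      ≤ ∑ i, ∑ j, ‖(x i - y i) - (x j - y j)‖ ^ 2 := by
        refine sum_le_sum fun i _ => sum_le_sum fun j _ => ?_
        rw [sub_sub_sub_comm]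
        exact sq_norm_sub_norm_le_sq_norm_sub _ _
    _ ≤ 2 * Fintype.card ι * ∑ i, ‖x i - y i‖ ^ 2 :=
        sum_sum_norm_sub_sq_le fun i => x i - y i

end InnerProductSpace

theorem pm_sq_le_two_rmsd_sq_general (N : ℕ)
    (x y : Fin N → EuclideanSpace ℝ (Fin 3)) :
    (1 / (N : ℝ) ^ 2) * ∑ i, ∑ j, (‖x i - x j‖ - ‖y i - y j‖) ^ 2 ≤
      (2 / (N : ℝ)) * ∑ i, ‖x i - y i‖ ^ 2 := by
  calc (1 / (N : ℝ) ^ 2) * ∑ i, ∑ j, (‖x i - x j‖ - ‖y i - y j‖) ^ 2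
      ≤ (1 / (N : ℝ) ^ 2) * (2 * N * ∑ i, ‖x i - y i‖ ^ 2) := by
        gcongr
        simpa using sum_sum_sq_norm_sub_sub_norm_sub_le x y
    _ = (2 / (N : ℝ)) * ∑ i, ‖x i - y i‖ ^ 2 := by
        rcases eq_or_ne (N : ℝ) 0 with hN | hN
        · simp [hN]
        · field_simp

/-- For point clouds `x, y : Fin N → EuclideanSpace ℝ (Fin 3)` with `N ≥ 1`,
the squared Packing Matching score is bounded by twice the squared RMSD:
`PM²(x,y) ≤ 2 · RMSD²(x,y)`. -/
theorem pm_sq_le_two_rmsd_sq (N : ℕ) (hN : 1 ≤ N)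
    (x y : Fin N → EuclideanSpace ℝ (Fin 3)) :
    (1 / (N : ℝ) ^ 2) * ∑ i, ∑ j, (‖x i - x j‖ - ‖y i - y j‖) ^ 2 ≤
      (2 / (N : ℝ)) * ∑ i, ‖x i - y i‖ ^ 2 :=
  pm_sq_le_two_rmsd_sq_general N x y
end

section
/- Pointwise displacement identity for a rigid motion encoded by a unit quaternion: let Q = (s, q⃗) be a unit quaternion with rotation matrix R(Q), and let a⃗, t⃗ ∈ ℝ³. Then ‖a⃗ − R(Q)·a⃗ − t⃗‖² = (q⃗ · t⃗)² + ‖−s·t⃗ + (2a⃗ − t⃗) × q⃗‖². -/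
open Matrix

/-- The Euclidean squared norm of a vector in `ℝ³`. -/
noncomputable def sqnorm (u : Fin 3 → ℝ) : ℝ :=
  ‖(EuclideanSpace.equiv (Fin 3) ℝ).symm u‖ ^ 2

/-- The rotation matrix associated with the unit quaternion `(s, q⃗)`. -/
def rotMat (s : ℝ) (q : Fin 3 → ℝ) : Matrix (Fin 3) (Fin 3) ℝ :=
  !![s ^ 2 + q 0 ^ 2 - q 1 ^ 2 - q 2 ^ 2, 2 * q 0 * q 1 - 2 * s * q 2,
      2 * q 0 * q 2 + 2 * s * q 1;
    2 * q 0 * q 1 + 2 * s * q 2, s ^ 2 - q 0 ^ 2 + q 1 ^ 2 - q 2 ^ 2,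
      2 * q 1 * q 2 - 2 * s * q 0;
    2 * q 0 * q 2 - 2 * s * q 1, 2 * q 1 * q 2 + 2 * s * q 0,
      s ^ 2 - q 0 ^ 2 - q 1 ^ 2 + q 2 ^ 2]

/-!
Identify `(r, v⃗)` with the quaternion `r + v⃗`. Then, for every `Q`, `Q a⃗ Q̄` is the pure
quaternion `R(Q) a⃗`. When `Q̄ Q = 1`, right multiplication by `Q` turns the
displacement `a⃗ − Q a⃗ Q̄ − t⃗` into `(a⃗ − t⃗) Q − Q a⃗`, whose real part is `q⃗ · t⃗` and whose vector
part is `−s t⃗ + (2a⃗ − t⃗) × q⃗`; the identity is then multiplicativity of the norm, with `|Q| = 1`.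
-/

namespace Quaternion

variable {R : Type*} [CommRing R]

def ofScalarVec (r : R) (v : Fin 3 → R) : ℍ[R] := ⟨r, v 0, v 1, v 2⟩

@[simp] theorem re_ofScalarVec (r : R) (v : Fin 3 → R) : (ofScalarVec r v).re = r := rfl

@[simp] theorem imI_ofScalarVec (r : R) (v : Fin 3 → R) : (ofScalarVec r v).imI = v 0 := rfl

@[simp] theorem imJ_ofScalarVec (r : R) (v : Fin 3 → R) : (ofScalarVec r v).imJ = v 1 := rfl

@[simp] theorem imK_ofScalarVec (r : R) (v : Fin 3 → R) : (ofScalarVec r v).imK = v 2 := rfl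

theorem ofScalarVec_sub (r r' : R) (v w : Fin 3 → R) :
    ofScalarVec (r - r') (v - w) = ofScalarVec r v - ofScalarVec r' w := by
  ext <;> simp

theorem ofScalarVec_mul (r r' : R) (v w : Fin 3 → R) :
    ofScalarVec r v * ofScalarVec r' w =
      ofScalarVec (r * r' - v ⬝ᵥ w) (r • w + r' • v + v ⨯₃ w) := by
  ext <;> simp [dotProduct, Fin.sum_univ_three, cross_apply, vecHead, vecTail] <;> ring

theorem normSq_ofScalarVec (r : ℝ) (v : Fin 3 → ℝ) :
    normSq (ofScalarVec r v) = r ^ 2 + sqnorm v := by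
  simp [normSq_def', sqnorm, EuclideanSpace.norm_sq_eq, Fin.sum_univ_three]
  ring

theorem ofScalarVec_rotMat_mulVec (s : ℝ) (q a : Fin 3 → ℝ) :
    ofScalarVec 0 (rotMat s q *ᵥ a) =
      ofScalarVec s q * ofScalarVec 0 a * star (ofScalarVec s q) := by
  ext <;> simp [rotMat, dotProduct, Fin.sum_univ_three] <;> ring

theorem ofScalarVec_displacement_mul (s : ℝ) (q a t : Fin 3 → ℝ)
    (hQ : s ^ 2 + sqnorm q = 1) :
    ofScalarVec 0 (a - rotMat s q *ᵥ a - t) * ofScalarVec s q =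
      ofScalarVec (q ⬝ᵥ t) ((-s) • t + ((2 : ℝ) • a - t) ⨯₃ q) := by
  set Q := ofScalarVec s q
  have hunit : star Q * Q = 1 := by
    rw [star_mul_self, normSq_ofScalarVec, hQ, coe_one]
  have hrot : ofScalarVec 0 (rotMat s q *ᵥ a) * Q = Q * ofScalarVec 0 a := by
    rw [ofScalarVec_rotMat_mulVec, mul_assoc, hunit, mul_one]
  calc ofScalarVec 0 (a - rotMat s q *ᵥ a - t) * Q
      = ofScalarVec 0 (a - t) * Q - ofScalarVec 0 (rotMat s q *ᵥ a) * Q := by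
        rw [sub_right_comm, ← sub_zero (0 : ℝ), ofScalarVec_sub, sub_mul, sub_zero]
    _ = ofScalarVec 0 (a - t) * Q - Q * ofScalarVec 0 a := by rw [hrot]
    _ = ofScalarVec (q ⬝ᵥ t) ((-s) • t + ((2 : ℝ) • a - t) ⨯₃ q) := by
        rw [ofScalarVec_mul, ofScalarVec_mul, ← ofScalarVec_sub]
        congr 1
        · simp [dotProduct, Fin.sum_univ_three]
          ring
        · ext i
          fin_cases i <;> simp [cross_apply, vecHead, vecTail] <;> ring

end Quaternion

/-- Pointwise displacement identity for a rigid motion encoded by a unit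
quaternion `Q = (s, q⃗)` with rotation matrix `R(Q)`:
`‖a⃗ − R(Q)·a⃗ − t⃗‖² = (q⃗ · t⃗)² + ‖−s·t⃗ + (2a⃗ − t⃗) × q⃗‖²`. -/
theorem displacement_sq_eq (s : ℝ) (q : Fin 3 → ℝ)
    (hQ : s ^ 2 + sqnorm q = 1) (a t : Fin 3 → ℝ) :
    sqnorm (a - rotMat s q *ᵥ a - t) =
      (q ⬝ᵥ t) ^ 2 + sqnorm ((-s) • t + ((2 : ℝ) • a - t) ⨯₃ q) := by
  have h := congrArg Quaternion.normSq (Quaternion.ofScalarVec_displacement_mul s q a t hQ)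
  rwa [map_mul, Quaternion.normSq_ofScalarVec, Quaternion.normSq_ofScalarVec,
    Quaternion.normSq_ofScalarVec, hQ, mul_one, zero_pow two_ne_zero, zero_add] at h
end

section
/- Pure-rotation displacement identity: let Q = (s, q⃗) be a unit quaternion with rotation matrix R(Q), and let a⃗ ∈ ℝ³. Then ‖a⃗ − R(Q)·a⃗‖² = 4·‖q⃗ × a⃗‖², equivalently ‖a⃗ − R(Q)·a⃗‖² = 4·(q⃗ᵀ · I(a⃗) · q⃗) where I(a⃗) = ‖a⃗‖²·E₃ − a⃗·a⃗ᵀ is the inertia tensor of the single point a⃗ (E₃ the 3×3 identity matrix). -/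
open Matrix

/-- The inertia tensor of a single point `a⃗ ∈ ℝ³`:
`I(a⃗) = ‖a⃗‖²·E₃ − a⃗·a⃗ᵀ`. -/
noncomputable def inertiaPoint (a : Fin 3 → ℝ) : Matrix (Fin 3) (Fin 3) ℝ :=
  sqnorm a • (1 : Matrix (Fin 3) (Fin 3) ℝ) - vecMulVec a a

/-! The rotation matrix acts by the Euler–Rodrigues formula
`R(Q) a = a + 2s (q × a) + 2 q × (q × a)`, so with `c = q × a` the displacement is
`a - R(Q) a = -2 (s c + q × c)`. Since `c ⊥ q`, the two summands are orthogonal and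
`‖q × c‖ = ‖q‖ ‖c‖`, whence `‖s c + q × c‖² = (s² + ‖q‖²) ‖c‖² = ‖c‖²`. The second identity is
Lagrange's identity `q ⬝ I(a) q = ‖a‖² ‖q‖² - (q ⬝ a)² = ‖q × a‖²`. -/

lemma sqnorm_eq_dotProduct (u : Fin 3 → ℝ) : sqnorm u = u ⬝ᵥ u := by
  rw [sqnorm, EuclideanSpace.norm_eq, Real.sq_sqrt (by positivity)]
  simp [dotProduct, sq]

lemma rotMat_mulVec (s : ℝ) (q a : Fin 3 → ℝ) :
    rotMat s q *ᵥ a = (s ^ 2 - q ⬝ᵥ q) • a + (2 * (q ⬝ᵥ a)) • q + (2 * s) • (q ⨯₃ a) := by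
  ext i
  fin_cases i <;>
  · simp only [Fin.zero_eta, Fin.mk_one, Fin.reduceFinMk, mulVec, rotMat, of_apply, cons_val',
      cons_val_fin_one, cons_val_zero, cons_val_one, cons_val, cons_dotProduct, vecHead, vecTail,
      Function.comp_apply, Fin.succ_zero_eq_one, Fin.succ_one_eq_two, dotProduct_of_isEmpty,
      add_zero, vec3_dotProduct, cross_apply, smul_cons, smul_eq_mul, smul_empty, Pi.add_apply,
      Pi.smul_apply]
    ring

lemma sub_rotMat_mulVec {s : ℝ} {q : Fin 3 → ℝ} (hQ : s ^ 2 + q ⬝ᵥ q = 1) (a : Fin 3 → ℝ) :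
    a - rotMat s q *ᵥ a = (-2 : ℝ) • (s • (q ⨯₃ a) + q ⨯₃ (q ⨯₃ a)) := by
  rw [rotMat_mulVec, cross_cross_eq_smul_sub_smul', show s ^ 2 = 1 - q ⬝ᵥ q by linarith]
  module

lemma dotProduct_self_smul_add_cross (s : ℝ) {q c : Fin 3 → ℝ} (hqc : q ⬝ᵥ c = 0) :
    (s • c + q ⨯₃ c) ⬝ᵥ (s • c + q ⨯₃ c) = (s ^ 2 + q ⬝ᵥ q) * (c ⬝ᵥ c) := by
  simp only [add_dotProduct, dotProduct_add, smul_dotProduct, dotProduct_smul, smul_eq_mul,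
    cross_dot_cross, dot_cross_self, hqc, dotProduct_comm (q ⨯₃ c) c]
  ring

lemma dotProduct_inertiaPoint_mulVec (q a : Fin 3 → ℝ) :
    q ⬝ᵥ (inertiaPoint a *ᵥ q) = (q ⨯₃ a) ⬝ᵥ (q ⨯₃ a) := by
  rw [inertiaPoint, sub_mulVec, smul_mulVec, one_mulVec, vecMulVec_mulVec, dotProduct_sub,
    dotProduct_smul, dotProduct_smul, op_smul_eq_mul, smul_eq_mul, cross_dot_cross,
    sqnorm_eq_dotProduct, dotProduct_comm a q]
  ring

/-- Pure-rotation displacement identity: for a unit quaternion `Q = (s, q⃗)`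
with rotation matrix `R(Q)` and any `a⃗ ∈ ℝ³`,
`‖a⃗ − R(Q)·a⃗‖² = 4·‖q⃗ × a⃗‖²`, equivalently
`‖a⃗ − R(Q)·a⃗‖² = 4·(q⃗ᵀ · I(a⃗) · q⃗)`. -/
theorem pure_rotation_displacement_sq (s : ℝ) (q : Fin 3 → ℝ)
    (hQ : s ^ 2 + sqnorm q = 1) (a : Fin 3 → ℝ) :
    sqnorm (a - rotMat s q *ᵥ a) = 4 * sqnorm (q ⨯₃ a) ∧
    sqnorm (a - rotMat s q *ᵥ a) = 4 * (q ⬝ᵥ (inertiaPoint a *ᵥ q)) := by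
  rw [sqnorm_eq_dotProduct] at hQ
  have hdisp : sqnorm (a - rotMat s q *ᵥ a) = 4 * sqnorm (q ⨯₃ a) := by
    rw [sqnorm_eq_dotProduct, sqnorm_eq_dotProduct, sub_rotMat_mulVec hQ, smul_dotProduct,
      dotProduct_smul, dotProduct_self_smul_add_cross s (dot_self_cross q a), hQ, smul_eq_mul,
      smul_eq_mul]
    ring
  refine ⟨hdisp, ?_⟩
  rw [hdisp, dotProduct_inertiaPoint_mulVec, sqnorm_eq_dotProduct]
end

section
/- Rigid-body RMSD formula in an arbitrary frame: let N ≥ 1, let a : Fin N → ℝ³ be points with weights w : Fin N → ℝ satisfying w i ≥ 0 and W := Σ_i w i > 0, let Q = (s, q⃗) be a unit quaternion with rotation matrix R := R(Q), and let t⃗ ∈ ℝ³. Then (1/W)·Σ_i w i · ‖a i − R·(a i) − t⃗‖² = ‖t⃗‖² + (4/W)·(q⃗ᵀ · I · q⃗) + 2·t⃗ᵀ·(R − E₃)·c⃗, where I is the weighted inertia tensor of the points a, c⃗ = (1/W)·Σ_i w i · a i is the weighted centroid, and E₃ is the 3×3 identity matrix. -/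
open Matrix

/-- The weighted inertia tensor of points `a i = (x i, y i, z i) ∈ ℝ³`
with weights `w i`. -/
def inertia (N : ℕ) (w : Fin N → ℝ) (a : Fin N → Fin 3 → ℝ) :
    Matrix (Fin 3) (Fin 3) ℝ :=
  !![∑ i, w i * ((a i 1) ^ 2 + (a i 2) ^ 2), -∑ i, w i * (a i 0 * a i 1),
      -∑ i, w i * (a i 0 * a i 2);
    -∑ i, w i * (a i 0 * a i 1), ∑ i, w i * ((a i 0) ^ 2 + (a i 2) ^ 2),
      -∑ i, w i * (a i 1 * a i 2);
    -∑ i, w i * (a i 0 * a i 2), -∑ i, w i * (a i 1 * a i 2),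
      ∑ i, w i * ((a i 0) ^ 2 + (a i 1) ^ 2)]

lemma sqnorm_sub (u v : Fin 3 → ℝ) : sqnorm (u - v) = sqnorm u - 2 * (u ⬝ᵥ v) + sqnorm v := by
  simp only [sqnorm_eq_dotProduct, sub_dotProduct, dotProduct_sub, dotProduct_comm v u]
  ring

lemma sqnorm_cross (u v : Fin 3 → ℝ) :
    sqnorm (u ⨯₃ v) = sqnorm u * sqnorm v - (u ⬝ᵥ v) ^ 2 := by
  simp only [sqnorm_eq_dotProduct, cross_dot_cross, dotProduct_comm v u]
  ring

lemma sqnorm_rotMat_mulVec (s : ℝ) (q u : Fin 3 → ℝ) :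
    sqnorm (rotMat s q *ᵥ u) = (s ^ 2 + sqnorm q) ^ 2 * sqnorm u := by
  simp only [sqnorm_eq_dotProduct, rotMat, vec3_dotProduct, mulVec, Fin.isValue, of_apply,
    cons_val', cons_val_zero, cons_val_one, cons_val_two, empty_val', cons_val_fin_one, head_cons,
    tail_cons, head_fin_const]
  ring

lemma dotProduct_rotMat_mulVec (s : ℝ) (q u : Fin 3 → ℝ) :
    u ⬝ᵥ (rotMat s q *ᵥ u) = (s ^ 2 - sqnorm q) * sqnorm u + 2 * (q ⬝ᵥ u) ^ 2 := by
  simp only [sqnorm_eq_dotProduct, rotMat, vec3_dotProduct, mulVec, Fin.isValue, of_apply,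
    cons_val', cons_val_zero, cons_val_one, cons_val_two, empty_val', cons_val_fin_one, head_cons,
    tail_cons, head_fin_const]
  ring

theorem sqnorm_sub_rotMat_mulVec {s : ℝ} {q : Fin 3 → ℝ} (hQ : s ^ 2 + sqnorm q = 1)
    (u : Fin 3 → ℝ) : sqnorm (u - rotMat s q *ᵥ u) = 4 * sqnorm (q ⨯₃ u) := by
  rw [sqnorm_sub, dotProduct_rotMat_mulVec, sqnorm_rotMat_mulVec, hQ, sqnorm_cross]
  linear_combination (-2 * sqnorm u) * hQ

theorem dotProduct_inertia_mulVec (N : ℕ) (w : Fin N → ℝ) (a : Fin N → Fin 3 → ℝ)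
    (q : Fin 3 → ℝ) : q ⬝ᵥ (inertia N w a *ᵥ q) = ∑ i, w i * sqnorm (q ⨯₃ a i) := by
  simp only [sqnorm_cross]
  simp only [sqnorm_eq_dotProduct, inertia, vec3_dotProduct, mulVec, Fin.isValue,
    of_apply, cons_val', cons_val_zero, cons_val_one, cons_val_two, empty_val', cons_val_fin_one,
    head_cons, tail_cons, head_fin_const, Finset.sum_mul, Finset.mul_sum, ← Finset.sum_neg_distrib,
    ← Finset.sum_add_distrib]
  exact Finset.sum_congr rfl fun i _ => by ring

theorem rigid_rmsd_formula_general (N : ℕ)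
    (a : Fin N → Fin 3 → ℝ) (w : Fin N → ℝ)
    (hW : 0 < ∑ i, w i)
    (s : ℝ) (q : Fin 3 → ℝ) (hQ : s ^ 2 + sqnorm q = 1) (t : Fin 3 → ℝ) :
    (1 / ∑ i, w i) * ∑ i, w i * sqnorm (a i - rotMat s q *ᵥ a i - t) =
      sqnorm t + (4 / ∑ i, w i) * (q ⬝ᵥ (inertia N w a *ᵥ q)) +
        2 * (t ⬝ᵥ ((rotMat s q - 1) *ᵥ ((1 / ∑ i, w i) • ∑ i, w i • a i))) := by
  set R := rotMat s q
  have hpoint : ∀ i, sqnorm (a i - R *ᵥ a i - t) =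
      4 * sqnorm (q ⨯₃ a i) + 2 * (t ⬝ᵥ ((R - 1) *ᵥ a i)) + sqnorm t := by
    intro i
    rw [sqnorm_sub, sqnorm_sub_rotMat_mulVec hQ, sub_mulVec, one_mulVec, dotProduct_sub,
      sub_dotProduct, dotProduct_comm t, dotProduct_comm t]
    ring
  have hsum : ∑ i, w i * sqnorm (a i - R *ᵥ a i - t) =
      4 * ∑ i, w i * sqnorm (q ⨯₃ a i) + 2 * (t ⬝ᵥ ((R - 1) *ᵥ ∑ i, w i • a i)) +
        (∑ i, w i) * sqnorm t := by
    simp only [hpoint, mulVec_sum, mulVec_smul, dotProduct_sum, dotProduct_smul, smul_eq_mul,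
      Finset.mul_sum, Finset.sum_mul, ← Finset.sum_add_distrib]
    exact Finset.sum_congr rfl fun i _ => by ring
  rw [hsum, dotProduct_inertia_mulVec, mulVec_smul, dotProduct_smul, smul_eq_mul]
  field_simp
  ring

/-- Rigid-body RMSD formula in an arbitrary frame: for weighted points `a`
with weights `w ≥ 0`, total weight `W > 0`, a unit quaternion `(s, q⃗)` with
rotation matrix `R` and a translation `t⃗`,
`(1/W)·Σ_i w i·‖a i − R·a i − t⃗‖² = ‖t⃗‖² + (4/W)·q⃗ᵀ·I·q⃗ + 2·t⃗ᵀ·(R − E₃)·c⃗`,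
where `I` is the weighted inertia tensor and `c⃗` the weighted centroid. -/
theorem rigid_rmsd_formula (N : ℕ) (hN : 1 ≤ N)
    (a : Fin N → Fin 3 → ℝ) (w : Fin N → ℝ)
    (hw : ∀ i, 0 ≤ w i) (hW : 0 < ∑ i, w i)
    (s : ℝ) (q : Fin 3 → ℝ) (hQ : s ^ 2 + sqnorm q = 1) (t : Fin 3 → ℝ) :
    (1 / ∑ i, w i) * ∑ i, w i * sqnorm (a i - rotMat s q *ᵥ a i - t) =
      sqnorm t + (4 / ∑ i, w i) * (q ⬝ᵥ (inertia N w a *ᵥ q)) +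
        2 * (t ⬝ᵥ ((rotMat s q - 1) *ᵥ ((1 / ∑ i, w i) • ∑ i, w i • a i))) :=
  rigid_rmsd_formula_general N a w hW s q hQ t
end
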